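/- arXiv:1907.10145 — 3 statements merged into one kernel-verified Lean document; each statement's English description precedes it below -/
import Mathlib

section
/- For 0 < r₁ ≤ r₂ < 1, the annuli A_{r₁} = {z ∈ ℂ : r₁ < |z| < 1} and A_{r₂} = {z ∈ ℂ : r₂ < |z| < 1} are biholomorphic (conformally equivalent) if and only if r₁ = r₂. -/
open Complex

/-- The annulus `{z : ℂ | r < |z| < 1}`. -/
def annulus (r : ℝ) : Set ℂ := {z : ℂ | r < ‖z‖ ∧ ‖z‖ < 1}

/-- Two open subsets of `ℂ` are conformally equivalent if there is a bijective holomorphic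
map between them with holomorphic inverse. -/
def ConformalEquivOn (U V : Set ℂ) : Prop :=
  ∃ f g : ℂ → ℂ, DifferentiableOn ℂ f U ∧ DifferentiableOn ℂ g V ∧
    Set.MapsTo f U V ∧ Set.MapsTo g V U ∧ Set.InvOn g f U V

/-!
A biholomorphism `f : A_{r₁} → A_{r₂}` is proper, so each end of `A_{r₁}` is carried to one end
of `A_{r₂}`, and not both to the same one; after replacing `f` by `r₂ / f` if necessary,
`‖f z‖ → 1` as `‖z‖ → 1` and `‖f z‖ → r₂` as `‖z‖ → r₁`. The maximum modulus principle applied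
to `f ^ q / z ^ p` for all integers `p, q` then pins `log ‖f‖` to the harmonic function
`c * log ‖z‖` with `c = log r₂ / log r₁ ∈ (0, 1]`. Hence `f (exp w) * exp (-c * w)` has modulus
one on the strip `log r₁ < re w < 0`, so it is constant, and its behaviour under
`w ↦ w + 2πi` forces `c ∈ ℤ`, i.e. `c = 1`.
-/

open Filter Topology Set

theorem isPreconnected_norm_preimage {T : Set ℝ} (hT : IsPreconnected T) (h0 : T ⊆ Ici 0) :
    IsPreconnected ((‖·‖) ⁻¹' T : Set ℂ) := by
  have hpolar : ((‖·‖) ⁻¹' T : Set ℂ) =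
      (fun p : ℝ × ℝ => (p.1 : ℂ) * exp (p.2 * I)) '' (T ×ˢ univ) := by
    ext z
    constructor
    · exact fun hz => ⟨(‖z‖, arg z), ⟨hz, trivial⟩, norm_mul_exp_arg_mul_I z⟩
    · rintro ⟨⟨t, θ⟩, ⟨ht, -⟩, rfl⟩
      simpa [abs_of_nonneg (mem_Ici.1 (h0 ht))] using ht
  rw [hpolar]
  exact (hT.prod isPreconnected_univ).image _ (by fun_prop)

theorem exists_isPreconnected_mem_comap_norm_nhdsLT {b : ℝ} (hb : 0 < b) {S : Set ℂ}
    (hS : S ∈ comap (‖·‖) (𝓝[<] b)) :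
    ∃ E ∈ comap (‖·‖) (𝓝[<] b), E ⊆ S ∧ IsPreconnected E := by
  obtain ⟨T, hT, hTS⟩ := mem_comap.1 hS
  obtain ⟨l, hl, hlT⟩ := mem_nhdsLT_iff_exists_Ioo_subset.1 hT
  refine ⟨(‖·‖) ⁻¹' Ioo (max l 0) b, preimage_mem_comap (Ioo_mem_nhdsLT (max_lt hl hb)),
    fun z hz => hTS (hlT (Ioo_subset_Ioo_left (le_max_left _ _) hz)),
    isPreconnected_norm_preimage isPreconnected_Ioo fun t ht => (le_max_right _ _).trans ht.1.le⟩

theorem exists_isPreconnected_mem_comap_norm_nhdsGT {a : ℝ} (ha : 0 ≤ a) {S : Set ℂ}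
    (hS : S ∈ comap (‖·‖) (𝓝[>] a)) :
    ∃ E ∈ comap (‖·‖) (𝓝[>] a), E ⊆ S ∧ IsPreconnected E := by
  obtain ⟨T, hT, hTS⟩ := mem_comap.1 hS
  obtain ⟨u, hu, huT⟩ := mem_nhdsGT_iff_exists_Ioo_subset.1 hT
  exact ⟨(‖·‖) ⁻¹' Ioo a u, preimage_mem_comap (Ioo_mem_nhdsGT hu), fun z hz => hTS (huT hz),
    isPreconnected_norm_preimage isPreconnected_Ioo fun t ht => ha.trans ht.1.le⟩

theorem Filter.Tendsto.of_sup_of_compl_mem {α β : Type*} {u : α → β} {l : Filter α}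
    {F G : Filter β} (h : Tendsto u l (F ⊔ G)) {W : Set β} (hW : ∀ᶠ x in l, u x ∈ W)
    (hG : Wᶜ ∈ G) : Tendsto u l F := by
  refine (tendsto_inf.2 ⟨h, tendsto_principal.2 hW⟩).mono_right ?_
  rw [inf_sup_right, inf_principal_eq_bot.2 hG, sup_bot_eq]
  exact inf_le_left

theorem Filter.Tendsto.tendsto_nhdsLT_or_tendsto_nhdsGT {X : Type*} [TopologicalSpace X]
    {l : Filter X} (hl : ∀ S ∈ l, ∃ E ∈ l, E ⊆ S ∧ IsPreconnected E) {U : Set X} (hU : U ∈ l)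
    {u : X → ℝ} (hu : ContinuousOn u U) {a b : ℝ} (hab : a < b)
    (h : Tendsto u l (𝓝[<] b ⊔ 𝓝[>] a)) : Tendsto u l (𝓝[<] b) ∨ Tendsto u l (𝓝[>] a) := by
  obtain ⟨c, hac, hcb⟩ := exists_between hab
  have hb : Ioi c ∈ 𝓝[<] b := mem_of_superset (Ioo_mem_nhdsLT hcb) Ioo_subset_Ioi_self
  have ha : Iio c ∈ 𝓝[>] a := mem_of_superset (Ioo_mem_nhdsGT hac) Ioo_subset_Iio_self
  obtain ⟨E, hE, hEsub, hEconn⟩ := hl _ (inter_mem hU (h (union_mem_sup hb ha)))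
  have hsplit := (hEconn.image u (hu.mono fun x hx => (hEsub hx).1)).subset_or_subset
    isOpen_Ioi isOpen_Iio (disjoint_left.2 fun x (h₁ : c < x) (h₂ : x < c) => h₁.asymm h₂)
    (image_subset_iff.2 fun x hx => (hEsub hx).2)
  rcases hsplit with hEb | hEa
  · refine .inl (h.of_sup_of_compl_mem (mem_of_superset hE (image_subset_iff.1 hEb)) ?_)
    exact compl_Ioi (a := c) ▸ mem_of_superset ha Iio_subset_Iic_self
  · refine .inr ((sup_comm (𝓝[<] b) _ ▸ h).of_sup_of_compl_mem
      (mem_of_superset hE (image_subset_iff.1 hEa)) ?_)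
    exact compl_Iio (a := c) ▸ mem_of_superset hb Ioi_subset_Ici_self

theorem IsCompact.compl_mem_comap_nhds {X Y : Type*} [TopologicalSpace X] [TopologicalSpace Y]
    [T2Space Y] {K : Set X} (hK : IsCompact K) {u : X → Y} (hu : ContinuousOn u K) {y : Y}
    (hy : ∀ x ∈ K, u x ≠ y) : Kᶜ ∈ comap u (𝓝 y) :=
  ⟨(u '' K)ᶜ, (hK.image_of_continuousOn hu).isClosed.isOpen_compl.mem_nhds
    fun ⟨x, hx, hxy⟩ => hy x hx hxy, fun x hx hxK => hx ⟨x, hxK, rfl⟩⟩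

theorem Ioo_mem_nhdsLT_sup_nhdsGT {a b : ℝ} (hab : a < b) : Ioo a b ∈ 𝓝[<] b ⊔ 𝓝[>] a :=
  mem_sup.2 ⟨Ioo_mem_nhdsLT hab, Ioo_mem_nhdsGT hab⟩

theorem annulus_mem_comap_norm {r : ℝ} (hr : r < 1) :
    annulus r ∈ comap (‖·‖) (𝓝[<] 1 ⊔ 𝓝[>] r) :=
  preimage_mem_comap (Ioo_mem_nhdsLT_sup_nhdsGT hr)

theorem tendsto_norm_nhdsLT_sup_nhdsGT {r s : ℝ} (hr : r < 1) {f g : ℂ → ℂ}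
    (hfm : MapsTo f (annulus r) (annulus s)) (hg : ContinuousOn g (annulus s))
    (hgm : MapsTo g (annulus s) (annulus r)) (hgf : LeftInvOn g f (annulus r)) :
    Tendsto (‖f ·‖) (comap (‖·‖) (𝓝[<] 1 ⊔ 𝓝[>] r)) (𝓝[<] 1 ⊔ 𝓝[>] s) := by
  intro T hT
  obtain ⟨l, hl, hlT⟩ := mem_nhdsLT_iff_exists_Ioo_subset.1 (mem_sup.1 hT).1
  obtain ⟨u, hu, huT⟩ := mem_nhdsGT_iff_exists_Ioo_subset.1 (mem_sup.1 hT).2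
  set K : Set ℂ := (‖·‖) ⁻¹' Icc u l
  have hK : IsCompact K := Metric.isCompact_of_isClosed_isBounded
    (isClosed_Icc.preimage continuous_norm) (isBounded_iff_forall_norm_le.2 ⟨l, fun z hz => hz.2⟩)
  have hKs : K ⊆ annulus s := fun z hz => ⟨hu.trans_le hz.1, hz.2.trans_lt hl⟩
  have hgK := hK.image_of_continuousOn (hg.mono hKs)
  have hgK_compl : (g '' K)ᶜ ∈ comap (‖·‖) (𝓝[<] 1 ⊔ 𝓝[>] r) := by
    rw [comap_sup]
    refine mem_sup.2 ⟨?_, ?_⟩ <;> refine comap_mono nhdsWithin_le_nhds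
      (hgK.compl_mem_comap_nhds continuous_norm.continuousOn ?_)
    · rintro _ ⟨w, hw, rfl⟩
      exact (hgm (hKs hw)).2.ne
    · rintro _ ⟨w, hw, rfl⟩
      exact (hgm (hKs hw)).1.ne'
  refine mem_map.2 ?_
  filter_upwards [hgK_compl, annulus_mem_comap_norm hr] with z hzK hz
  have hfz : f z ∉ K := fun h => hzK ⟨f z, h, hgf hz⟩
  simp only [K, mem_preimage, mem_Icc, not_and_or, not_le] at hfz
  rcases hfz with h | h
  · exact huT ⟨(hfm hz).1, h⟩
  · exact hlT ⟨h, (hfm hz).2⟩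

theorem nhdsLT_sup_nhdsGT_le_map_norm {r s : ℝ} (hs₀ : 0 ≤ s) (hs : s < 1) {f g : ℂ → ℂ}
    (hfg : RightInvOn g f (annulus s))
    (hg : Tendsto (‖g ·‖) (comap (‖·‖) (𝓝[<] 1 ⊔ 𝓝[>] s)) (𝓝[<] 1 ⊔ 𝓝[>] r)) :
    𝓝[<] 1 ⊔ 𝓝[>] s ≤ map (‖f ·‖) (comap (‖·‖) (𝓝[<] 1 ⊔ 𝓝[>] r)) := by
  have hrange : range (‖·‖ : ℂ → ℝ) ∈ 𝓝[<] 1 ⊔ 𝓝[>] s :=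
    mem_of_superset (Ioo_mem_nhdsLT_sup_nhdsGT hs) fun t ht =>
      ⟨t, by simp [abs_of_nonneg (hs₀.trans ht.1.le)]⟩
  calc 𝓝[<] 1 ⊔ 𝓝[>] s = map (‖·‖) (comap (‖·‖) (𝓝[<] 1 ⊔ 𝓝[>] s)) := by
        rw [map_comap, inf_eq_left.2 (le_principal_iff.2 hrange)]
    _ = map (fun w => ‖f (g w)‖) (comap (‖·‖) (𝓝[<] 1 ⊔ 𝓝[>] s)) :=
        map_congr (mem_of_superset (annulus_mem_comap_norm hs) fun w hw => by
          show ‖w‖ = ‖f (g w)‖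
          rw [hfg hw])
    _ ≤ map (‖f ·‖) (comap (‖·‖) (𝓝[<] 1 ⊔ 𝓝[>] r)) := by
        rw [show (fun w => ‖f (g w)‖) = (‖f ·‖) ∘ g from rfl, ← map_map]
        exact map_mono (tendsto_comap_iff.2 hg)

theorem mapsTo_div_annulus {s : ℝ} (hs : 0 < s) :
    MapsTo (fun w : ℂ => s / w) (annulus s) (annulus s) := by
  intro w ⟨hsw, hw1⟩
  have hw : 0 < ‖w‖ := hs.trans hsw
  show s < ‖(s : ℂ) / w‖ ∧ ‖(s : ℂ) / w‖ < 1
  rw [norm_div, norm_real, Real.norm_of_nonneg hs.le]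
  exact ⟨(lt_div_iff₀ hw).2 (by nlinarith), (div_lt_one hw).2 hsw⟩

theorem ConformalEquivOn.exists_tendsto_norm_or {r s : ℝ} (hr₀ : 0 < r) (hr : r < 1)
    (hs₀ : 0 ≤ s) (hs : s < 1) (h : ConformalEquivOn (annulus r) (annulus s)) :
    ∃ f : ℂ → ℂ, DifferentiableOn ℂ f (annulus r) ∧ MapsTo f (annulus r) (annulus s) ∧
      (Tendsto (‖f ·‖) (comap (‖·‖) (𝓝[<] 1)) (𝓝[<] 1) ∧
          Tendsto (‖f ·‖) (comap (‖·‖) (𝓝[>] r)) (𝓝[>] s) ∨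
        Tendsto (‖f ·‖) (comap (‖·‖) (𝓝[<] 1)) (𝓝[>] s) ∧
          Tendsto (‖f ·‖) (comap (‖·‖) (𝓝[>] r)) (𝓝[<] 1)) := by
  obtain ⟨f, g, hf, hg, hfm, hgm, hgf, hfg⟩ := h
  have hf_bdry := tendsto_norm_nhdsLT_sup_nhdsGT hr hfm hg.continuousOn hgm hgf
  have hsurj := nhdsLT_sup_nhdsGT_le_map_norm hs₀ hs hfg
    (tendsto_norm_nhdsLT_sup_nhdsGT hs hgm hf.continuousOn hfm hfg)
  have hcont : ContinuousOn (‖f ·‖) (annulus r) :=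
    continuous_norm.comp_continuousOn hf.continuousOn
  have hout := (hf_bdry.mono_left (comap_mono le_sup_left)).tendsto_nhdsLT_or_tendsto_nhdsGT
    (fun _ => exists_isPreconnected_mem_comap_norm_nhdsLT one_pos)
    (preimage_mem_comap (Ioo_mem_nhdsLT hr)) hcont hs
  have hin := (hf_bdry.mono_left (comap_mono le_sup_right)).tendsto_nhdsLT_or_tendsto_nhdsGT
    (fun _ => exists_isPreconnected_mem_comap_norm_nhdsGT hr₀.le)
    (preimage_mem_comap (Ioo_mem_nhdsGT hr)) hcont hs
  have hdisj : Disjoint (𝓝[<] (1 : ℝ)) (𝓝[>] s) :=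
    (disjoint_nhds_nhds.2 hs.ne').mono nhdsWithin_le_nhds nhdsWithin_le_nhds
  rw [comap_sup, map_sup] at hsurj
  refine ⟨f, hf, hfm, ?_⟩
  -- `f` covers both ends of `annulus s` (`hsurj`), so the ends of `annulus r` go to different ones.
  rcases hout with hout | hout <;> rcases hin with hin | hin
  · exact absurd (hdisj.symm.eq_bot_of_le (le_sup_right.trans (hsurj.trans (sup_le hout hin))))
      (NeBot.ne inferInstance)
  · exact .inl ⟨hout, hin⟩
  · exact .inr ⟨hout, hin⟩
  · exact absurd (hdisj.eq_bot_of_le (le_sup_left.trans (hsurj.trans (sup_le hout hin))))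
      (NeBot.ne inferInstance)

theorem ConformalEquivOn.exists_tendsto_norm {r s : ℝ} (hr₀ : 0 < r) (hr : r < 1) (hs₀ : 0 < s)
    (hs : s < 1) (h : ConformalEquivOn (annulus r) (annulus s)) :
    ∃ f : ℂ → ℂ, DifferentiableOn ℂ f (annulus r) ∧ MapsTo f (annulus r) (annulus s) ∧
      Tendsto (‖f ·‖) (comap (‖·‖) (𝓝[<] 1)) (𝓝 1) ∧
      Tendsto (‖f ·‖) (comap (‖·‖) (𝓝[>] r)) (𝓝 s) := by
  obtain ⟨f, hf, hfm, ⟨hout, hin⟩ | ⟨hout, hin⟩⟩ := h.exists_tendsto_norm_or hr₀ hr hs₀.le hs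
  · exact ⟨f, hf, hfm, hout.mono_right nhdsWithin_le_nhds, hin.mono_right nhdsWithin_le_nhds⟩
  have hnorm : ∀ z, ‖(s : ℂ) / f z‖ = s / ‖f z‖ := fun z => by
    rw [norm_div, norm_real, Real.norm_of_nonneg hs₀.le]
  refine ⟨fun z => s / f z, (differentiableOn_const _).div hf fun z hz h0 => ?_,
    (mapsTo_div_annulus hs₀).comp hfm, ?_, ?_⟩
  · simpa [h0] using hs₀.trans (hfm hz).1
  · simp only [hnorm]
    have h := (tendsto_const_nhds (x := s)).div (hout.mono_right nhdsWithin_le_nhds) hs₀.ne'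
    rwa [div_self hs₀.ne'] at h
  · simp only [hnorm]
    have h := (tendsto_const_nhds (x := s)).div (hin.mono_right nhdsWithin_le_nhds) one_ne_zero
    rwa [div_one] at h

theorem norm_le_max_of_tendsto {r : ℝ} {G : ℂ → ℂ} (hG : DifferentiableOn ℂ G (annulus r))
    {α β : ℝ} (hα : Tendsto (‖G ·‖) (comap (‖·‖) (𝓝[<] 1)) (𝓝 α))
    (hβ : Tendsto (‖G ·‖) (comap (‖·‖) (𝓝[>] r)) (𝓝 β)) {z : ℂ} (hz : z ∈ annulus r) :
    ‖G z‖ ≤ max α β := by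
  refine le_of_forall_gt_imp_ge_of_dense fun C hC => ?_
  obtain ⟨T₁, hT₁, hGT₁⟩ := mem_comap.1 (hα.eventually_lt_const ((le_max_left α β).trans_lt hC))
  obtain ⟨T₂, hT₂, hGT₂⟩ := mem_comap.1 (hβ.eventually_lt_const ((le_max_right α β).trans_lt hC))
  obtain ⟨l, hl, hlT⟩ := mem_nhdsLT_iff_exists_Ioo_subset.1 hT₁
  obtain ⟨u, hu, huT⟩ := mem_nhdsGT_iff_exists_Ioo_subset.1 hT₂
  obtain ⟨ρ₁, hrρ₁, hρ₁⟩ := exists_between (lt_min hu hz.1)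
  obtain ⟨ρ₂, hρ₂, hρ₂1⟩ := exists_between (max_lt hl hz.2)
  have hρ₁z : ρ₁ < ‖z‖ := hρ₁.trans_le (min_le_right _ _)
  have hzρ₂ : ‖z‖ < ρ₂ := (le_max_right _ _).trans_lt hρ₂
  set V : Set ℂ := (‖·‖) ⁻¹' Ioo ρ₁ ρ₂
  have hVcl : closure V ⊆ annulus r := by
    refine (continuous_norm.closure_preimage_subset _).trans fun w hw => ?_
    rw [mem_preimage, closure_Ioo (hρ₁z.trans hzρ₂).ne] at hw
    exact ⟨hrρ₁.trans_le hw.1, hw.2.trans_lt hρ₂1⟩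
  have hVbd : Bornology.IsBounded V := isBounded_iff_forall_norm_le.2 ⟨ρ₂, fun w hw => hw.2.le⟩
  refine Complex.norm_le_of_forall_mem_frontier_norm_le hVbd (hG.mono hVcl).diffContOnCl
    (fun w hw => ?_) (subset_closure ⟨hρ₁z, hzρ₂⟩)
  have hw' := continuous_norm.frontier_preimage_subset _ hw
  rw [mem_preimage, frontier_Ioo (hρ₁z.trans hzρ₂)] at hw'
  obtain hw' | hw' : ‖w‖ = ρ₁ ∨ ‖w‖ = ρ₂ := hw'
  · refine (hGT₂ (huT (show ‖w‖ ∈ Ioo r u from ?_))).le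
    rw [hw']
    exact ⟨hrρ₁, hρ₁.trans_le (min_le_left _ _)⟩
  · refine (hGT₁ (hlT (show ‖w‖ ∈ Ioo l 1 from ?_))).le
    rw [hw']
    exact ⟨(le_max_left _ _).trans_lt hρ₂, hρ₂1⟩

theorem zpow_div_zpow_le_max {r s : ℝ} (hr : 0 < r) (hs : 0 < s) {f : ℂ → ℂ}
    (hf : DifferentiableOn ℂ f (annulus r)) (hfm : MapsTo f (annulus r) (annulus s))
    (hout : Tendsto (‖f ·‖) (comap (‖·‖) (𝓝[<] 1)) (𝓝 1))
    (hin : Tendsto (‖f ·‖) (comap (‖·‖) (𝓝[>] r)) (𝓝 s)) (p q : ℤ) {z : ℂ}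
    (hz : z ∈ annulus r) : ‖f z‖ ^ q / ‖z‖ ^ p ≤ max 1 (s ^ q / r ^ p) := by
  have hz₀ : ∀ w ∈ annulus r, w ≠ 0 := fun w hw => norm_pos_iff.1 (hr.trans hw.1)
  have hf₀ : ∀ w ∈ annulus r, f w ≠ 0 := fun w hw => norm_pos_iff.1 (hs.trans (hfm hw).1)
  have hG : DifferentiableOn ℂ (fun w => f w ^ q / w ^ p) (annulus r) :=
    (hf.zpow (Or.inl hf₀)).div (differentiableOn_id.zpow (Or.inl hz₀))
      fun w hw => zpow_ne_zero p (hz₀ w hw)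
  have hnorm : ∀ w, ‖f w ^ q / w ^ p‖ = ‖f w‖ ^ q / ‖w‖ ^ p := fun w => by
    rw [norm_div, norm_zpow, norm_zpow]
  have hα : Tendsto (fun w => ‖f w ^ q / w ^ p‖) (comap (‖·‖) (𝓝[<] 1)) (𝓝 1) := by
    have h := (hout.zpow₀ q (Or.inl one_ne_zero)).div
      ((tendsto_comap.mono_right nhdsWithin_le_nhds).zpow₀ p (Or.inl one_ne_zero)) (by simp)
    simp only [one_zpow, div_one] at h
    simp only [hnorm]
    exact h
  have hβ : Tendsto (fun w => ‖f w ^ q / w ^ p‖) (comap (‖·‖) (𝓝[>] r)) (𝓝 (s ^ q / r ^ p)) := by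
    have h := (hin.zpow₀ q (Or.inl hs.ne')).div
      ((tendsto_comap.mono_right nhdsWithin_le_nhds).zpow₀ p (Or.inl hr.ne'))
      (zpow_ne_zero p hr.ne')
    simp only [hnorm]
    exact h
  simpa only [hnorm] using norm_le_max_of_tendsto hG hα hβ hz

theorem tendsto_intFloor_mul_div_atTop (t : ℝ) :
    Tendsto (fun x : ℝ => (⌊x * t⌋ : ℝ) / x) atTop (𝓝 t) := by
  have hlow : Tendsto (fun x : ℝ => t - x⁻¹) atTop (𝓝 t) := by
    simpa using (tendsto_const_nhds (x := t)).sub tendsto_inv_atTop_zero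
  refine tendsto_of_tendsto_of_tendsto_of_le_of_le' hlow tendsto_const_nhds ?_ ?_ <;>
    filter_upwards [eventually_gt_atTop 0] with x hx
  · rw [le_div_iff₀ hx, sub_mul, inv_mul_cancel₀ hx.ne', mul_comm]
    linarith [Int.lt_floor_add_one (x * t)]
  · rw [div_le_iff₀ hx, mul_comm]
    exact Int.floor_le _

theorem mul_eq_mul_of_forall_int_sub_le_max {a b A B : ℝ}
    (h : ∀ p q : ℤ, q * a - p * b ≤ max 0 (q * A - p * B)) : a * B = A * b := by
  -- Homogeneity and continuity extend `h` from `ℤ²` to `ℝ²`; then evaluate at `±(B, A)`.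
  have key : ∀ t s : ℝ, t * a - s * b ≤ max 0 (t * A - s * B) := by
    intro t s
    have ht := tendsto_intFloor_mul_div_atTop t
    have hs := tendsto_intFloor_mul_div_atTop s
    refine le_of_tendsto_of_tendsto ((ht.mul_const a).sub (hs.mul_const b))
      (tendsto_const_nhds.max ((ht.mul_const A).sub (hs.mul_const B))) ?_
    filter_upwards [eventually_gt_atTop 0] with x hx
    calc (⌊x * t⌋ : ℝ) / x * a - ⌊x * s⌋ / x * b = (⌊x * t⌋ * a - ⌊x * s⌋ * b) / x := by ring
      _ ≤ max 0 (⌊x * t⌋ * A - ⌊x * s⌋ * B) / x :=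
        div_le_div_of_nonneg_right (h ⌊x * s⌋ ⌊x * t⌋) hx.le
      _ = max (0 / x) ((⌊x * t⌋ * A - ⌊x * s⌋ * B) / x) := by rw [max_div_div_right hx.le]
      _ = max 0 (⌊x * t⌋ / x * A - ⌊x * s⌋ / x * B) := by congr 1 <;> ring
  have h₁ := key B A
  have h₂ := key (-B) (-A)
  rw [show B * A - A * B = 0 by ring, max_self] at h₁
  rw [show -B * A - -A * B = 0 by ring, max_self] at h₂
  linarith

theorem norm_eq_rpow_of_tendsto {r s : ℝ} (hr₀ : 0 < r) (hr : r < 1) (hs₀ : 0 < s) {f : ℂ → ℂ}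
    (hf : DifferentiableOn ℂ f (annulus r)) (hfm : MapsTo f (annulus r) (annulus s))
    (hout : Tendsto (‖f ·‖) (comap (‖·‖) (𝓝[<] 1)) (𝓝 1))
    (hin : Tendsto (‖f ·‖) (comap (‖·‖) (𝓝[>] r)) (𝓝 s)) {z : ℂ} (hz : z ∈ annulus r) :
    ‖f z‖ = ‖z‖ ^ (Real.log s / Real.log r) := by
  have hz₀ : 0 < ‖z‖ := hr₀.trans hz.1
  have hfz₀ : 0 < ‖f z‖ := hs₀.trans (hfm hz).1
  have hlog : Real.log ‖f z‖ * Real.log r = Real.log s * Real.log ‖z‖ := by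
    refine mul_eq_mul_of_forall_int_sub_le_max fun p q => ?_
    have h := zpow_div_zpow_le_max hr₀ hs₀ hf hfm hout hin p q hz
    rwa [← Real.exp_le_exp, Monotone.map_max Real.exp_monotone, Real.exp_zero, Real.exp_sub,
      Real.exp_sub, ← Real.log_zpow, ← Real.log_zpow, ← Real.log_zpow, ← Real.log_zpow,
      Real.exp_log (zpow_pos hfz₀ q), Real.exp_log (zpow_pos hz₀ p),
      Real.exp_log (zpow_pos hs₀ q), Real.exp_log (zpow_pos hr₀ p)]
  rw [Real.rpow_def_of_pos hz₀, ← Real.exp_log hfz₀]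
  congr 1
  field_simp [(Real.log_neg hr₀ hr).ne]
  linarith

theorem exists_int_eq_of_norm_eq_rpow {r c : ℝ} (hr₀ : 0 < r) (hr : r < 1) {f : ℂ → ℂ}
    (hf : DifferentiableOn ℂ f (annulus r)) (hfc : ∀ z ∈ annulus r, ‖f z‖ = ‖z‖ ^ c) :
    ∃ n : ℤ, c = n := by
  set S : Set ℂ := {w | Real.log r < w.re} ∩ {w | w.re < 0}
  have hS : IsOpen S := (isOpen_lt continuous_const continuous_re).inter
    (isOpen_lt continuous_re continuous_const)
  have hexp : MapsTo exp S (annulus r) := fun w hw => by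
    show r < ‖exp w‖ ∧ ‖exp w‖ < 1
    rw [norm_exp]
    exact ⟨(Real.log_lt_iff_lt_exp hr₀).1 hw.1, Real.exp_lt_one_iff.2 hw.2⟩
  set H : ℂ → ℂ := fun w => f (exp w) * exp (-c * w)
  have hH : DifferentiableOn ℂ H S :=
    (hf.comp differentiable_exp.differentiableOn hexp).mul (by fun_prop)
  have hH1 : ∀ w ∈ S, ‖H w‖ = 1 := fun w hw => by
    simp only [H, norm_mul, hfc _ (hexp hw), norm_exp, ← Real.exp_mul, ← Real.exp_add,
      Real.exp_eq_one_iff]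
    simp only [neg_mul, neg_re, re_ofReal_mul]
    ring
  set w₀ : ℂ := ((Real.log r / 2 : ℝ) : ℂ)
  have hlog : Real.log r < 0 := Real.log_neg hr₀ hr
  have hw₀ : w₀ ∈ S :=
    ⟨show Real.log r < (Real.log r / 2 : ℝ) by linarith, show Real.log r / 2 < 0 by linarith⟩
  have hw₀' : w₀ + 2 * Real.pi * I ∈ S := by simpa [S] using hw₀
  have hconst := Complex.eqOn_of_isPreconnected_of_isMaxOn_norm
    ((convex_halfSpace_re_gt _).inter (convex_halfSpace_re_lt _)).isPreconnected hS hH hw₀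
    (fun w hw => by simp [hH1 w hw, hH1 w₀ hw₀]) hw₀'
  have hper : H (w₀ + 2 * Real.pi * I) = H w₀ * exp (-c * (2 * Real.pi * I)) := by
    simp only [H]
    rw [exp_periodic w₀, mul_add, exp_add]
    ring
  have hH₀ : H w₀ ≠ 0 := norm_ne_zero_iff.1 (by rw [hH1 w₀ hw₀]; exact one_ne_zero)
  obtain ⟨n, hn⟩ := exp_eq_one_iff.1
    (mul_left_cancel₀ hH₀ ((hper.symm.trans hconst).trans (mul_one _).symm))
  refine ⟨-n, ?_⟩
  have hcn : (-c : ℂ) = n := mul_right_cancel₀ two_pi_I_ne_zero hn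
  exact_mod_cast neg_eq_iff_eq_neg.1 hcn

theorem eq_of_log_div_log_eq_intCast {r₁ r₂ : ℝ} (h₀ : 0 < r₁) (h₁₂ : r₁ ≤ r₂) (h₁ : r₂ < 1)
    {n : ℤ} (hn : Real.log r₂ / Real.log r₁ = n) : r₁ = r₂ := by
  have hlog₁ := Real.log_neg h₀ (h₁₂.trans_lt h₁)
  have hlog₂ := Real.log_neg (h₀.trans_le h₁₂) h₁
  have hpos : (0 : ℤ) < n := by exact_mod_cast hn ▸ div_pos_of_neg_of_neg hlog₂ hlog₁
  have hle : n ≤ 1 := by exact_mod_cast hn ▸ (div_le_one_of_neg hlog₁).2 (Real.log_le_log h₀ h₁₂)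
  rw [show n = 1 by omega, Int.cast_one, div_eq_one_iff_eq hlog₁.ne] at hn
  exact Real.log_injOn_pos h₀ (h₀.trans_le h₁₂) hn.symm

/-- for `0 < r₁ ≤ r₂ < 1`, the annuli `A_{r₁}` and `A_{r₂}` are conformally
equivalent if and only if `r₁ = r₂`. -/
theorem annuli_conformalEquiv_iff (r₁ r₂ : ℝ)
    (h₀ : 0 < r₁) (h₁₂ : r₁ ≤ r₂) (h₁ : r₂ < 1) :
    ConformalEquivOn (annulus r₁) (annulus r₂) ↔ r₁ = r₂ := by
  constructor
  · intro h
    have hr₁ : r₁ < 1 := h₁₂.trans_lt h₁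
    have hr₂ : 0 < r₂ := h₀.trans_le h₁₂
    obtain ⟨f, hf, hfm, hout, hin⟩ := h.exists_tendsto_norm h₀ hr₁ hr₂ h₁
    obtain ⟨n, hn⟩ := exists_int_eq_of_norm_eq_rpow h₀ hr₁ hf fun z hz =>
      norm_eq_rpow_of_tendsto h₀ hr₁ hr₂ hf hfm hout hin hz
    exact eq_of_log_div_log_eq_intCast h₀ h₁₂ h₁ hn
  · rintro rfl
    exact ⟨id, id, differentiableOn_id, differentiableOn_id, mapsTo_id _, mapsTo_id _,
      leftInvOn_id _, rightInvOn_id _⟩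
end

section
/- Let ρ : F₂ → Sₙ be a transitive monodromy representation, so c₁ + c₂ ≤ n + 1 where cᵢ is the number of cycles of ρ(gᵢ). (Equivalently: for a transitive permutation group action generated by two permutations σ₁, σ₂ on a set of n elements, the number of orbits of σ₁ plus the number of orbits of σ₂ is at most n + 1.) -/
/-- The number of cycles of a permutation `σ` of `Fin n`, i.e. the number of orbits of the
subgroup generated by `σ` acting on `{1,…,n}` (fixed points count as cycles). -/
noncomputable def numCycles {n : ℕ} (σ : Equiv.Perm (Fin n)) : ℕ :=
  Nat.card (MulAction.orbitRel.Quotient (Subgroup.zpowers σ) (Fin n))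

/-!
The functions `α → ℚ` invariant under a permutation group form a space whose dimension is the
number of its orbits. For `Uᵢ` the invariant functions of `⟨σᵢ⟩`, the intersection `U₁ ∩ U₂`
consists of the functions invariant under `⟨σ₁, σ₂⟩`, which are constant by transitivity, so
Grassmann's formula gives `c₁ + c₂ = dim (U₁ + U₂) + dim (U₁ ∩ U₂) ≤ n + 1`.
-/

open Module MulAction

section InvariantFunctions

variable {G : Type*} [Group G] (α : Type*) [MulAction G α] (K : Type*) [Field K]

def Subgroup.invariantFunctions (H : Subgroup G) : Submodule K (α → K) where
  carrier := {f | ∀ g ∈ H, ∀ a, f (g • a) = f a}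
  add_mem' hf hf' g hg a := by simp only [Pi.add_apply, hf g hg a, hf' g hg a]
  zero_mem' _ _ _ := rfl
  smul_mem' c f hf g hg a := by simp only [Pi.smul_apply, hf g hg a]

namespace Subgroup

variable {α K}

@[simp]
theorem mem_invariantFunctions {H : Subgroup G} {f : α → K} :
    f ∈ H.invariantFunctions α K ↔ ∀ g ∈ H, ∀ a, f (g • a) = f a :=
  Iff.rfl

variable (α K)

theorem range_funLeft_orbitRel_mk (H : Subgroup G) :
    LinearMap.range (LinearMap.funLeft K K (Quotient.mk (orbitRel H α))) =
      H.invariantFunctions α K := by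
  ext f
  rw [LinearMap.mem_range, mem_invariantFunctions]
  constructor
  · rintro ⟨q, rfl⟩ g hg a
    exact congrArg q (Quotient.sound (mem_orbit a (⟨g, hg⟩ : H)))
  · intro hf
    refine ⟨Quotient.lift f fun a b hab ↦ ?_, rfl⟩
    obtain ⟨⟨g, hg⟩, rfl⟩ := orbitRel_apply.mp hab
    exact hf g hg b

theorem finrank_invariantFunctions [Finite α] (H : Subgroup G) :
    finrank K (H.invariantFunctions α K) = Nat.card (orbitRel.Quotient H α) := by
  have : Fintype (orbitRel.Quotient H α) := Fintype.ofFinite _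
  rw [← range_funLeft_orbitRel_mk, LinearMap.finrank_range_of_inj
    (LinearMap.funLeft_injective_of_surjective _ _ _ Quotient.mk_surjective),
    finrank_fintype_fun_eq_card, Nat.card_eq_fintype_card]

theorem invariantFunctions_sup (H H' : Subgroup G) :
    (H ⊔ H').invariantFunctions α K = H.invariantFunctions α K ⊓ H'.invariantFunctions α K := by
  refine le_antisymm (le_inf ?_ ?_) fun f ⟨hf, hf'⟩ ↦ ?_
  · exact fun f hf g hg ↦ hf g (mem_sup_left hg)
  · exact fun f hf g hg ↦ hf g (mem_sup_right hg)
  let stabilizer : Subgroup G :=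
    { carrier := {g | ∀ a, f (g • a) = f a}
      mul_mem' := fun hg hg' a ↦ by rw [mul_smul, hg, hg']
      one_mem' := fun a ↦ by rw [one_smul]
      inv_mem' := fun {g} hg a ↦ by rw [← hg, smul_inv_smul] }
  exact fun g hg ↦ sup_le (show H ≤ stabilizer from hf) (show H' ≤ stabilizer from hf') hg

end Subgroup

end InvariantFunctions

theorem card_orbitRel_add_card_orbitRel_le {G α : Type*} [Group G] [MulAction G α] [Finite α]
    (H H' : Subgroup G) [IsPretransitive ↥(H ⊔ H') α] :
    Nat.card (orbitRel.Quotient H α) + Nat.card (orbitRel.Quotient H' α) ≤ Nat.card α + 1 := by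
  have : Fintype α := Fintype.ofFinite α
  set U := H.invariantFunctions α ℚ
  set U' := H'.invariantFunctions α ℚ
  have hsup : finrank ℚ ↥(U ⊔ U') ≤ Nat.card α := by
    simpa only [finrank_fintype_fun_eq_card, Nat.card_eq_fintype_card]
      using Submodule.finrank_le (U ⊔ U')
  have hinf : finrank ℚ ↥(U ⊓ U') ≤ 1 := by
    rw [← Subgroup.invariantFunctions_sup, Subgroup.finrank_invariantFunctions,
      Finite.card_le_one_iff_subsingleton, ← pretransitive_iff_subsingleton_quotient]
    infer_instance
  calc Nat.card (orbitRel.Quotient H α) + Nat.card (orbitRel.Quotient H' α)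
      = finrank ℚ U + finrank ℚ U' := by
        rw [Subgroup.finrank_invariantFunctions, Subgroup.finrank_invariantFunctions]
    _ = finrank ℚ ↥(U ⊔ U') + finrank ℚ ↥(U ⊓ U') :=
        (Submodule.finrank_sup_add_finrank_inf_eq U U').symm
    _ ≤ Nat.card α + 1 := add_le_add hsup hinf

theorem FreeGroup.range_le_of_forall_mem {ι G : Type*} [Group G] (ρ : FreeGroup ι →* G)
    {H : Subgroup G} (h : ∀ i, ρ (of i) ∈ H) : ρ.range ≤ H := by
  rw [MonoidHom.range_eq_map, ← closure_range_of, Subgroup.map_le_iff_le_comap,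
    Subgroup.closure_le]
  rintro _ ⟨i, rfl⟩
  exact h i

/-- for a transitive monodromy representation `ρ : F₂ → Sₙ`, the number of cycles
of `ρ(g₁)` plus the number of cycles of `ρ(g₂)` is at most `n + 1`. -/
theorem cycles_add_cycles_le_of_transitive (n : ℕ)
    (ρ : FreeGroup (Fin 2) →* Equiv.Perm (Fin n))
    (htrans : ∀ a b : Fin n, ∃ g : FreeGroup (Fin 2), ρ g a = b) :
    numCycles (ρ (FreeGroup.of 0)) + numCycles (ρ (FreeGroup.of 1)) ≤ n + 1 := by
  set H := Subgroup.zpowers (ρ (FreeGroup.of 0)) ⊔ Subgroup.zpowers (ρ (FreeGroup.of 1))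
  have hrange : ρ.range ≤ H := FreeGroup.range_le_of_forall_mem ρ <| Fin.forall_fin_two.mpr
    ⟨Subgroup.mem_sup_left (Subgroup.mem_zpowers _),
      Subgroup.mem_sup_right (Subgroup.mem_zpowers _)⟩
  have : IsPretransitive H (Fin n) := ⟨fun a b ↦
    let ⟨g, hg⟩ := htrans a b
    ⟨⟨ρ g, hrange ⟨g, rfl⟩⟩, hg⟩⟩
  simpa only [numCycles, Nat.card_fin] using card_orbitRel_add_card_orbitRel_le (α := Fin n) _ _
end

section
/- The theta constant to the fourth power θ₃⁴(0,τ) = (Σ_{n∈ℤ} q^{n²})⁴, q = e^{2πiτ}, satisfies the weight-2 modular transformation law under Γ₀(4): for all (a b; c d) ∈ Γ₀(4), θ₃⁴(0, (aτ+b)/(cτ+d)) = (cτ+d)² θ₃⁴(0, τ). -/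
open Complex

/-- The theta constant `θ₃(0,τ) = Σ_{n ∈ ℤ} q^{n²}`, `q = e^{2πiτ}`. -/
noncomputable def theta3 (τ : ℂ) : ℂ :=
  ∑' n : ℤ, Complex.exp (2 * Real.pi * Complex.I * τ * (n : ℂ) ^ 2)

/-!
We have `θ₃(τ) = ϑ(2τ)` for Mathlib's `jacobiTheta` `ϑ`. The transformation laws
`ϑ(τ + 2) = ϑ(τ)` and `ϑ(-1/τ) = (-iτ)^{1/2} ϑ(τ)` say that `ϑ⁴` is invariant in weight 2 under
`T²` and changes sign under `S`, so it is invariant under `S T² S⁻¹ = (1 0; -2 1)`.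
Conjugating by `τ ↦ 2τ` turns `T²` and `S T² S⁻¹` into `T` and `S T⁴ S⁻¹ = (1 0; -4 1)`, so
`θ₃⁴` is invariant under these and under `-1`. These three elements generate `Γ₀(4)`, by a
Euclidean descent on the lower-left entry `c`: reduce `d` modulo `c` with powers of `T`, then
`c` modulo `4d` with powers of `(1 0; -4 1)`.
-/

open UpperHalfPlane ModularGroup Matrix.SpecialLinearGroup

open scoped MatrixGroups ModularForm

lemma Int.exists_two_mul_natAbs_add_mul_le (x c : ℤ) (hc : c ≠ 0) :
    ∃ n : ℤ, 2 * (x + n * c).natAbs ≤ c.natAbs := by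
  have hpos : 0 < c.natAbs := Int.natAbs_pos.mpr hc
  have hdiv := Int.bmod_add_bdiv x c.natAbs
  obtain ⟨q, hq⟩ : c ∣ x.bmod c.natAbs - x :=
    Int.natAbs_dvd.mp ⟨-x.bdiv c.natAbs, by linear_combination hdiv⟩
  refine ⟨q, ?_⟩
  have := Int.le_bmod (x := x) hpos
  have := Int.bmod_le (x := x) hpos
  rw [mul_comm q, ← hq]
  omega

lemma Int.exists_natAbs_sub_mul_lt_of_four_dvd_of_odd {c d : ℤ} (hc : c ≠ 0) (h4 : 4 ∣ c)
    (hd : Odd d) : ∃ n m : ℤ, (c - 4 * m * (c * n + d)).natAbs < c.natAbs := by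
  obtain ⟨n, hn⟩ := Int.exists_two_mul_natAbs_add_mul_le d c hc
  obtain ⟨j, hj⟩ : Odd (c * n + d) :=
    (Int.even_mul.mpr (.inl (even_iff_two_dvd.mpr (dvd_trans (by norm_num) h4)))).add_odd hd
  obtain ⟨m, hm⟩ := Int.exists_two_mul_natAbs_add_mul_le c (4 * (c * n + d)) (by omega)
  refine ⟨n, -m, ?_⟩
  rw [show c - 4 * -m * (c * n + d) = c + m * (4 * (c * n + d)) by ring]
  rw [add_comm d, mul_comm n] at hn
  obtain ⟨k, rfl⟩ := h4
  rw [hj] at hm hn ⊢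
  -- `|c'| ≤ 2|d'| ≤ |c|`, and the first inequality is strict since `4 ∣ c'` but `2|d'| ≡ 2 mod 4`.
  omega

namespace ModularGroup

lemma coe_S_mul_T_zpow_mul_S_inv (n : ℤ) : ↑(S * T ^ n * S⁻¹) = !![1, 0; -n, 1] := by
  rw [S_inv, coe_mul, coe_mul, coe_neg, coe_S, coe_T_zpow]
  simp

lemma mul_T_zpow_apply_one_zero (γ : SL(2, ℤ)) (n : ℤ) : (γ * T ^ n) 1 0 = γ 1 0 := by
  simp [coe_mul, coe_T_zpow, Matrix.mul_apply, Fin.sum_univ_two]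

lemma mul_T_zpow_apply_one_one (γ : SL(2, ℤ)) (n : ℤ) :
    (γ * T ^ n) 1 1 = γ 1 0 * n + γ 1 1 := by
  simp [coe_mul, coe_T_zpow, Matrix.mul_apply, Fin.sum_univ_two]

lemma mul_S_mul_T_zpow_mul_S_inv_apply_one_zero (γ : SL(2, ℤ)) (n : ℤ) :
    (γ * (S * T ^ n * S⁻¹)) 1 0 = γ 1 0 - n * γ 1 1 := by
  rw [coe_mul, coe_S_mul_T_zpow_mul_S_inv]
  simp [Matrix.mul_apply, Fin.sum_univ_two, sub_eq_add_neg, mul_comm]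

lemma eq_T_zpow_or_eq_neg_T_zpow_of_apply_one_zero_eq_zero {γ : SL(2, ℤ)} (hγ : γ 1 0 = 0) :
    γ = T ^ γ 0 1 ∨ γ = -T ^ (-γ 0 1) := by
  have had := γ.det_coe
  rw [Matrix.det_fin_two, hγ, mul_zero, sub_zero] at had
  rcases Int.eq_one_or_neg_one_of_mul_eq_one' had with ⟨ha, hd⟩ | ⟨ha, hd⟩
  · left
    ext i j
    fin_cases i <;> fin_cases j <;> simp [ha, hd, hγ, coe_T_zpow]
  · right
    ext i j
    fin_cases i <;> fin_cases j <;> simp [ha, hd, hγ, coe_T_zpow]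

end ModularGroup

lemma CongruenceSubgroup.Gamma0_four_le_closure :
    Gamma0 4 ≤ Subgroup.closure {T, S * T ^ 4 * S⁻¹, -1} := by
  set H := Subgroup.closure {T, S * T ^ 4 * S⁻¹, -1}
  have hT : T ∈ H := Subgroup.subset_closure (by simp)
  have hW : S * T ^ 4 * S⁻¹ ∈ H := Subgroup.subset_closure (by simp)
  have hneg : -1 ∈ H := Subgroup.subset_closure (by simp)
  suffices key : ∀ N : ℕ, ∀ γ : SL(2, ℤ), (γ 1 0).natAbs = N → 4 ∣ γ 1 0 → γ ∈ H by
    intro γ hγ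
    exact key _ γ rfl ((ZMod.intCast_zmod_eq_zero_iff_dvd _ 4).mp (Gamma0_mem.mp hγ))
  intro N
  induction N using Nat.strong_induction_on with
  | _ N ih =>
  intro γ hN h4
  by_cases hc : γ 1 0 = 0
  · rcases eq_T_zpow_or_eq_neg_T_zpow_of_apply_one_zero_eq_zero hc with h | h <;> rw [h]
    · exact H.zpow_mem hT _
    · rw [← neg_one_mul]
      exact H.mul_mem hneg (H.zpow_mem hT _)
  have hd : Odd (γ 1 1) := by
    rw [← Int.not_even_iff_odd, even_iff_two_dvd]
    intro h2
    have := (isCoprime_row γ 1).isUnit_of_dvd' (dvd_trans (by norm_num) h4) h2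
    exact absurd (Int.isUnit_iff.mp this) (by norm_num)
  obtain ⟨n, m, hnm⟩ := Int.exists_natAbs_sub_mul_lt_of_four_dvd_of_odd hc h4 hd
  have hc' : (γ * T ^ n * (S * T ^ 4 * S⁻¹) ^ m) 1 0 =
      γ 1 0 - 4 * m * (γ 1 0 * n + γ 1 1) := by
    rw [conj_zpow, ← zpow_natCast, ← zpow_mul, mul_S_mul_T_zpow_mul_S_inv_apply_one_zero,
      mul_T_zpow_apply_one_zero, mul_T_zpow_apply_one_one]
    push_cast
    ring
  refine (H.mul_mem_cancel_right (H.zpow_mem hT n)).mp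
    ((H.mul_mem_cancel_right (H.zpow_mem hW m)).mp (ih _ (hN ▸ hc' ▸ hnm) _ rfl ?_))
  rw [hc']
  exact dvd_sub h4 (dvd_mul_of_dvd_left (dvd_mul_right _ _) _)

namespace ModularForm

lemma slash_eq_self_of_mem_closure {k : ℤ} {f : ℍ → ℂ} {s : Set SL(2, ℤ)}
    (hs : ∀ γ ∈ s, f ∣[k] γ = f) {γ : SL(2, ℤ)} (hγ : γ ∈ Subgroup.closure s) : f ∣[k] γ = f := by
  induction hγ using Subgroup.closure_induction with
  | mem γ h => exact hs γ h
  | one => exact SlashAction.slash_one k f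
  | mul a b _ _ ha hb => rw [SlashAction.slash_mul, ha, hb]
  | inv a _ ha =>
    conv_lhs => rw [← ha]
    rw [← SlashAction.slash_mul, mul_inv_cancel, SlashAction.slash_one]

lemma slash_neg_of_even {k : ℤ} (hk : Even k) (f : ℍ → ℂ) (γ : SL(2, ℤ)) :
    f ∣[k] (-γ) = f ∣[k] γ := by
  ext τ
  rw [SL_slash_apply, SL_slash_apply, SL_neg_smul, ← hk.neg.neg_zpow (denom _ _), ← denom_neg]
  congr 3
  ext i j
  simp

/-- The hypotheses on the entries say `γ' = diag(t, 1) γ diag(t, 1)⁻¹`. -/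
lemma slash_comp_smul_eq_self {k : ℤ} {f : ℍ → ℂ} (t : {x : ℝ // 0 < x})
    {γ γ' : SL(2, ℤ)} (h00 : γ' 0 0 = γ 0 0) (h01 : (γ' 0 1 : ℝ) = t * γ 0 1)
    (h10 : t * (γ' 1 0 : ℝ) = γ 1 0) (h11 : γ' 1 1 = γ 1 1) (hf : f ∣[k] γ' = f) :
    (fun τ ↦ f (t • τ)) ∣[k] γ = fun τ ↦ f (t • τ) := by
  ext τ
  have h01' : (γ' 0 1 : ℂ) = (t : ℝ) * γ 0 1 := mod_cast h01
  have h10' : ((t : ℝ) : ℂ) * γ' 1 0 = γ 1 0 := mod_cast h10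
  have hden : (γ' 1 0 : ℂ) * ↑(t • τ) + γ' 1 1 = γ 1 0 * τ + γ 1 1 := by
    rw [coe_pos_real_smul, h11, Complex.real_smul, ← h10']
    ring
  have hsmul : t • (γ • τ) = γ' • (t • τ) := by
    ext
    rw [coe_pos_real_smul, coe_specialLinearGroup_apply, coe_specialLinearGroup_apply]
    simp only [algebraMap_int_eq, eq_intCast, Complex.ofReal_intCast]
    rw [hden, h00, h01', coe_pos_real_smul]
    simp only [Complex.real_smul]
    ring
  rw [slash_action_eq'_iff, hsmul, ← hden]
  exact (slash_action_eq'_iff k f γ' (t • τ)).mp (congrFun hf _)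

end ModularForm

noncomputable def jacobiThetaPowFour (τ : ℍ) : ℂ := jacobiTheta τ ^ 4

lemma jacobiThetaPowFour_slash_S : jacobiThetaPowFour ∣[(2 : ℤ)] S = -jacobiThetaPowFour := by
  ext τ
  have hτ : (τ : ℂ) ≠ 0 := τ.ne_zero
  have hsqrt : ((-Complex.I * τ) ^ (1 / 2 : ℂ)) ^ 4 = -(τ : ℂ) ^ 2 := by
    rw [← cpow_nat_mul]
    norm_num [mul_pow]
  rw [ModularForm.SL_slash_apply, denom_S, jacobiThetaPowFour, jacobiTheta_S_smul, mul_pow, hsqrt,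
    Pi.neg_apply, jacobiThetaPowFour]
  field_simp

lemma jacobiThetaPowFour_slash_T_sq :
    jacobiThetaPowFour ∣[(2 : ℤ)] (T ^ 2) = jacobiThetaPowFour := by
  ext τ
  have hT2 : ((T ^ 2 : SL(2, ℤ)) : Matrix (Fin 2) (Fin 2) ℤ) = !![1, 2; 0, 1] := by
    simpa using coe_T_zpow 2
  rw [ModularForm.slash_action_eq'_iff, jacobiThetaPowFour, jacobiThetaPowFour,
    jacobiTheta_T_sq_smul, hT2]
  simp

lemma jacobiThetaPowFour_slash_S_mul_T_sq_mul_S_inv :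
    jacobiThetaPowFour ∣[(2 : ℤ)] (S * T ^ 2 * S⁻¹) = jacobiThetaPowFour := by
  rw [SlashAction.slash_mul, SlashAction.slash_mul, jacobiThetaPowFour_slash_S,
    SlashAction.neg_slash, jacobiThetaPowFour_slash_T_sq, SlashAction.neg_slash, S_inv,
    ModularForm.slash_neg_of_even even_two, jacobiThetaPowFour_slash_S, neg_neg]

lemma theta3_eq_jacobiTheta (z : ℂ) : theta3 z = jacobiTheta (2 * z) :=
  tsum_congr fun n ↦ congrArg Complex.exp (by ring)

noncomputable def theta3PowFour (τ : ℍ) : ℂ := theta3 τ ^ 4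

lemma theta3PowFour_eq_jacobiThetaPowFour_comp_smul :
    theta3PowFour = fun τ ↦ jacobiThetaPowFour ((⟨2, two_pos⟩ : {x : ℝ // 0 < x}) • τ) := by
  ext τ
  rw [theta3PowFour, jacobiThetaPowFour, coe_pos_real_smul, theta3_eq_jacobiTheta,
    Complex.real_smul, Complex.ofReal_ofNat]

lemma theta3PowFour_slash_T : theta3PowFour ∣[(2 : ℤ)] T = theta3PowFour := by
  have hT2 : ((T ^ 2 : SL(2, ℤ)) : Matrix (Fin 2) (Fin 2) ℤ) = !![1, 2; 0, 1] := by
    simpa using coe_T_zpow 2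
  rw [theta3PowFour_eq_jacobiThetaPowFour_comp_smul]
  exact ModularForm.slash_comp_smul_eq_self _ (by simp [hT2, coe_T]) (by simp [hT2, coe_T])
    (by simp [hT2, coe_T]) (by simp [hT2, coe_T]) jacobiThetaPowFour_slash_T_sq

lemma theta3PowFour_slash_S_mul_T_pow_four_mul_S_inv :
    theta3PowFour ∣[(2 : ℤ)] (S * T ^ 4 * S⁻¹) = theta3PowFour := by
  have h2 : ((S * T ^ 2 * S⁻¹ : SL(2, ℤ)) : Matrix (Fin 2) (Fin 2) ℤ) = !![1, 0; -2, 1] := by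
    simpa using coe_S_mul_T_zpow_mul_S_inv 2
  have h4 : ((S * T ^ 4 * S⁻¹ : SL(2, ℤ)) : Matrix (Fin 2) (Fin 2) ℤ) = !![1, 0; -4, 1] := by
    simpa using coe_S_mul_T_zpow_mul_S_inv 4
  rw [theta3PowFour_eq_jacobiThetaPowFour_comp_smul]
  exact ModularForm.slash_comp_smul_eq_self _ (by simp [h2, h4]) (by simp [h2, h4])
    (by norm_num [h2, h4]) (by simp [h2, h4]) jacobiThetaPowFour_slash_S_mul_T_sq_mul_S_inv

lemma theta3PowFour_slash_neg_one : theta3PowFour ∣[(2 : ℤ)] (-1 : SL(2, ℤ)) = theta3PowFour :=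
  (ModularForm.slash_neg_of_even even_two _ 1).trans (SlashAction.slash_one _ _)

/-- `θ₃⁴(0,τ)` satisfies the weight-2 modular transformation law under `Γ₀(4)`. -/
theorem theta3_pow_four_weight_two_Gamma0_four
    (γ : Matrix.SpecialLinearGroup (Fin 2) ℤ)
    (hγ : γ ∈ CongruenceSubgroup.Gamma0 4) (τ : UpperHalfPlane) :
    theta3 ((((γ : Matrix (Fin 2) (Fin 2) ℤ) 0 0 : ℂ) * (τ : ℂ) +
              ((γ : Matrix (Fin 2) (Fin 2) ℤ) 0 1 : ℂ)) /
            (((γ : Matrix (Fin 2) (Fin 2) ℤ) 1 0 : ℂ) * (τ : ℂ) +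
              ((γ : Matrix (Fin 2) (Fin 2) ℤ) 1 1 : ℂ))) ^ 4
      = (((γ : Matrix (Fin 2) (Fin 2) ℤ) 1 0 : ℂ) * (τ : ℂ) +
          ((γ : Matrix (Fin 2) (Fin 2) ℤ) 1 1 : ℂ)) ^ 2 * theta3 (τ : ℂ) ^ 4 := by
  have hinv : theta3PowFour ∣[(2 : ℤ)] γ = theta3PowFour :=
    ModularForm.slash_eq_self_of_mem_closure
      (by rintro _ (rfl | rfl | rfl)
          exacts [theta3PowFour_slash_T, theta3PowFour_slash_S_mul_T_pow_four_mul_S_inv,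
            theta3PowFour_slash_neg_one])
      (CongruenceSubgroup.Gamma0_four_le_closure hγ)
  have h := (ModularForm.slash_action_eq'_iff 2 _ γ τ).mp (congrFun hinv τ)
  rw [theta3PowFour, theta3PowFour, coe_specialLinearGroup_apply] at h
  simpa using h
end
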